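/- If X and Y are conditionally independent given U and U takes values in a finite set of cardinality m, then I(X:Y) ≤ log₂ m; equivalently the cardinality of U is at least 2^{I(X:Y)}. -/
import Mathlib


open Finset Real
open scoped Classical

/-- Probability mass of an event under pmf `p` on a finite sample space. -/
noncomputable def pmass {Ω : Type*} [Fintype Ω] (p : Ω → ℝ) (E : Ω → Prop) : ℝ :=
  ∑ ω, if E ω then p ω else 0

/-- Conditional probability P(E | F). -/
noncomputable def condProb {Ω : Type*} [Fintype Ω] (p : Ω → ℝ) (E F : Ω → Prop) : ℝ :=
  pmass p (fun ω => E ω ∧ F ω) / pmass p F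

/-- `p` is a probability mass function. -/
structure IsPMF {Ω : Type*} [Fintype Ω] (p : Ω → ℝ) : Prop where
  nonneg : ∀ ω, 0 ≤ p ω
  sum_one : ∑ ω, p ω = 1

/-- Base-2 Shannon entropy of a finite-valued random variable. -/
noncomputable def ent {Ω α : Type*} [Fintype Ω] [Fintype α] (p : Ω → ℝ) (X : Ω → α) : ℝ :=
  -∑ a, pmass p (fun ω => X ω = a) * Real.logb 2 (pmass p (fun ω => X ω = a))

/-- Mutual information I(X:Y) = H(X) + H(Y) - H(X,Y). -/
noncomputable def mi {Ω α β : Type*} [Fintype Ω] [Fintype α] [Fintype β]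
    (p : Ω → ℝ) (X : Ω → α) (Y : Ω → β) : ℝ :=
  ent p X + ent p Y - ent p (fun ω => (X ω, Y ω))

/-- Entropy of `X` in the conditional distribution given event `E`. -/
noncomputable def condEntGiven {Ω α : Type*} [Fintype Ω] [Fintype α]
    (p : Ω → ℝ) (X : Ω → α) (E : Ω → Prop) : ℝ :=
  -∑ a, condProb p (fun ω => X ω = a) E * Real.logb 2 (condProb p (fun ω => X ω = a) E)

/-- Conditional entropy H(X|Y) = ∑_y P(Y=y) H(X|Y=y). -/
noncomputable def condEnt {Ω α β : Type*} [Fintype Ω] [Fintype α] [Fintype β]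
    (p : Ω → ℝ) (X : Ω → α) (Y : Ω → β) : ℝ :=
  ∑ b, pmass p (fun ω => Y ω = b) * condEntGiven p X (fun ω => Y ω = b)

/-- Mutual information of X and Y in the conditional distribution given event `E`. -/
noncomputable def condMIGiven {Ω α β : Type*} [Fintype Ω] [Fintype α] [Fintype β]
    (p : Ω → ℝ) (X : Ω → α) (Y : Ω → β) (E : Ω → Prop) : ℝ :=
  condEntGiven p X E + condEntGiven p Y E - condEntGiven p (fun ω => (X ω, Y ω)) E

/-- Conditional mutual information I(X:Y|Z) = ∑_z P(Z=z) I(X:Y|Z=z). -/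
noncomputable def condMI {Ω α β γ : Type*} [Fintype Ω] [Fintype α] [Fintype β] [Fintype γ]
    (p : Ω → ℝ) (X : Ω → α) (Y : Ω → β) (Z : Ω → γ) : ℝ :=
  ∑ z, pmass p (fun ω => Z ω = z) * condMIGiven p X Y (fun ω => Z ω = z)

/-- X and Y are conditionally independent given U:
P(X=a, Y=b | U=u) = P(X=a|U=u)·P(Y=b|U=u) whenever P(U=u) > 0. -/
def CondIndep {Ω α β γ : Type*} [Fintype Ω]
    (p : Ω → ℝ) (X : Ω → α) (Y : Ω → β) (U : Ω → γ) : Prop :=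
  ∀ u a b, 0 < pmass p (fun ω => U ω = u) →
    condProb p (fun ω => X ω = a ∧ Y ω = b) (fun ω => U ω = u) =
      condProb p (fun ω => X ω = a) (fun ω => U ω = u) *
        condProb p (fun ω => Y ω = b) (fun ω => U ω = u)

/-- X and Y are (unconditionally) independent. -/
def Indep {Ω α β : Type*} [Fintype Ω]
    (p : Ω → ℝ) (X : Ω → α) (Y : Ω → β) : Prop :=
  ∀ a b, pmass p (fun ω => X ω = a ∧ Y ω = b) =
    pmass p (fun ω => X ω = a) * pmass p (fun ω => Y ω = b)

section Aux
variable {Ω : Type*} [Fintype Ω] {p : Ω → ℝ}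

lemma pmass_nonneg (hp : ∀ ω, 0 ≤ p ω) (E : Ω → Prop) : 0 ≤ pmass p E :=
  Finset.sum_nonneg fun ω _ => by by_cases h : E ω <;> simp [pmass, h, hp ω]

lemma pmass_mono (hp : ∀ ω, 0 ≤ p ω) {E F : Ω → Prop} (h : ∀ ω, E ω → F ω) :
    pmass p E ≤ pmass p F := by
  refine Finset.sum_le_sum fun ω _ => ?_
  by_cases hE : E ω <;> by_cases hF : F ω <;> simp_all [hp ω]

lemma pmass_congr {E F : Ω → Prop} (h : ∀ ω, E ω ↔ F ω) : pmass p E = pmass p F := by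
  unfold pmass; exact Finset.sum_congr rfl fun ω _ => by rw [h ω]

lemma sum_pmass_eq {α : Type*} [Fintype α] (X : Ω → α) (F : Ω → Prop) :
    ∑ a, pmass p (fun ω => X ω = a ∧ F ω) = pmass p F := by
  unfold pmass
  rw [Finset.sum_comm]
  refine Finset.sum_congr rfl fun ω _ => ?_
  by_cases hF : F ω
  · simp [hF, Finset.sum_ite_eq]
  · simp [hF]

lemma condProb_nonneg (hp : ∀ ω, 0 ≤ p ω) (E F : Ω → Prop) : 0 ≤ condProb p E F :=
  div_nonneg (pmass_nonneg hp _) (pmass_nonneg hp _)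

lemma pmass_and_eq (hp : ∀ ω, 0 ≤ p ω) (E F : Ω → Prop) :
    pmass p (fun ω => E ω ∧ F ω) = pmass p F * condProb p E F := by
  by_cases h : pmass p F = 0
  · have h1 : pmass p (fun ω => E ω ∧ F ω) = 0 :=
      le_antisymm (h ▸ pmass_mono hp fun ω hω => hω.2) (pmass_nonneg hp _)
    simp [condProb, h, h1]
  · rw [condProb]; field_simp

lemma sum_condProb_eq (hp : ∀ ω, 0 ≤ p ω) {α : Type*} [Fintype α] (X : Ω → α)
    {F : Ω → Prop} (h : pmass p F ≠ 0) :
    ∑ a, condProb p (fun ω => X ω = a) F = 1 := by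
  have : ∑ a, pmass p F * condProb p (fun ω => X ω = a) F = pmass p F := by
    simp_rw [← pmass_and_eq hp]; exact sum_pmass_eq X F
  rw [← Finset.mul_sum] at this
  field_simp at this
  tauto

lemma condProb_zero {E F : Ω → Prop} (h : pmass p F = 0) : condProb p E F = 0 := by
  simp [condProb, h]

end Aux

theorem mi_le_log_card_of_condIndep {Ω α β γ : Type*}
    [Fintype Ω] [Fintype α] [Fintype β] [Fintype γ]
    (p : Ω → ℝ) (hp : IsPMF p) (X : Ω → α) (Y : Ω → β) (U : Ω → γ)
    (hind : CondIndep p X Y U) :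
    mi p X Y ≤ Real.logb 2 (Fintype.card γ) ∧
      2 ^ (mi p X Y) ≤ (Fintype.card γ : ℝ) := by
  have hpn := hp.nonneg
  set w : γ → ℝ := fun u => pmass p (fun ω => U ω = u) with hw
  set r : γ → α → ℝ := fun u a => condProb p (fun ω => X ω = a) (fun ω => U ω = u) with hr
  set s : γ → β → ℝ := fun u b => condProb p (fun ω => Y ω = b) (fun ω => U ω = u) with hs
  set q : α → β → ℝ := fun a b => pmass p (fun ω => X ω = a ∧ Y ω = b) with hqdef
  set qa : α → ℝ := fun a => pmass p (fun ω => X ω = a) with hqadef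
  set qb : β → ℝ := fun b => pmass p (fun ω => Y ω = b) with hqbdef
  have hw0 : ∀ u, 0 ≤ w u := fun u => pmass_nonneg hpn _
  have hr0 : ∀ u a, 0 ≤ r u a := fun u a => condProb_nonneg hpn _ _
  have hs0 : ∀ u b, 0 ≤ s u b := fun u b => condProb_nonneg hpn _ _
  have hq0 : ∀ a b, 0 ≤ q a b := fun a b => pmass_nonneg hpn _
  -- decomposition of the joint
  have hq : ∀ a b, q a b = ∑ u, w u * (r u a * s u b) := by
    intro a b
    have h1 : q a b = ∑ u, pmass p (fun ω => U ω = u ∧ (X ω = a ∧ Y ω = b)) :=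
      (sum_pmass_eq U _).symm
    rw [h1]
    refine Finset.sum_congr rfl fun u _ => ?_
    rw [pmass_congr (fun ω => and_comm), pmass_and_eq hpn]
    by_cases hwu : w u = 0
    · have h0 : pmass p (fun ω => U ω = u) = 0 := hwu
      rw [h0, hwu]; ring
    · rw [hind u a b (lt_of_le_of_ne (hw0 u) (Ne.symm hwu))]
  have hqa : ∀ a, qa a = ∑ u, w u * r u a := by
    intro a
    have h1 : qa a = ∑ u, pmass p (fun ω => U ω = u ∧ X ω = a) := (sum_pmass_eq U _).symm
    rw [h1]
    exact Finset.sum_congr rfl fun u _ => by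
      rw [pmass_congr (fun ω => and_comm), pmass_and_eq hpn]
  have hwr_le : ∀ u a, w u * r u a ≤ qa a := by
    intro u a
    rw [hqa a]
    exact Finset.single_le_sum (fun v _ => mul_nonneg (hw0 v) (hr0 v a)) (Finset.mem_univ u)
  -- marginals
  have hq_marg : ∀ a, qa a = ∑ b, q a b := by
    intro a
    rw [show qa a = pmass p (fun ω => X ω = a) from rfl, ← sum_pmass_eq Y (fun ω => X ω = a)]
    exact Finset.sum_congr rfl fun b _ => pmass_congr fun ω => and_comm
  have hq_margb : ∀ b, qb b = ∑ a, q a b := by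
    intro b
    rw [show qb b = pmass p (fun ω => Y ω = b) from rfl, ← sum_pmass_eq X (fun ω => Y ω = b)]
  have htot : ∑ a, ∑ b, q a b = 1 := by
    simp_rw [← hq_marg]
    rw [show (∑ a, qa a) = ∑ a, pmass p (fun ω => X ω = a ∧ True) from
      Finset.sum_congr rfl fun a _ => pmass_congr fun ω => (and_iff_left trivial).symm,
      sum_pmass_eq X (fun _ => True)]
    unfold pmass
    simpa using hp.sum_one
  have hposfacts : ∀ a b, q a b ≠ 0 → 0 < q a b ∧ 0 < qa a ∧ 0 < qb b := by
    intro a b h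
    have hqpos : 0 < q a b := lt_of_le_of_ne (hq0 a b) (Ne.symm h)
    refine ⟨hqpos, lt_of_lt_of_le hqpos ?_, lt_of_lt_of_le hqpos ?_⟩
    · rw [hq_marg a]
      exact Finset.single_le_sum (fun b' _ => hq0 a b') (Finset.mem_univ b)
    · rw [hq_margb b]
      exact Finset.single_le_sum (fun a' _ => hq0 a' b) (Finset.mem_univ a)
  -- rewrite mi as a single sum
  have hmi : mi p X Y = ∑ a, ∑ b, q a b * Real.logb 2 (q a b / (qa a * qb b)) := by
    have hX : ent p X = -∑ a, ∑ b, q a b * Real.logb 2 (qa a) := by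
      unfold ent
      congr 1
      refine Finset.sum_congr rfl fun a _ => ?_
      rw [show pmass p (fun ω => X ω = a) = qa a from rfl, hq_marg a, Finset.sum_mul]
    have hY' : ent p Y = -∑ b, ∑ a, q a b * Real.logb 2 (qb b) := by
      unfold ent
      congr 1
      refine Finset.sum_congr rfl fun b _ => ?_
      rw [show pmass p (fun ω => Y ω = b) = qb b from rfl, hq_margb b, Finset.sum_mul]
    have hY : ent p Y = -∑ a, ∑ b, q a b * Real.logb 2 (qb b) := by
      rw [hY', Finset.sum_comm]
    have hXY : ent p (fun ω => (X ω, Y ω)) = -∑ a, ∑ b, q a b * Real.logb 2 (q a b) := by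
      unfold ent
      congr 1
      rw [Fintype.sum_prod_type]
      refine Finset.sum_congr rfl fun a _ => Finset.sum_congr rfl fun b _ => ?_
      have hpm : pmass p (fun ω => (X ω, Y ω) = (a, b)) = q a b :=
        pmass_congr fun ω => by simp [Prod.ext_iff]
      rw [hpm]
    have key : ∀ a b, q a b * Real.logb 2 (q a b / (qa a * qb b)) =
        q a b * Real.logb 2 (q a b) - q a b * Real.logb 2 (qa a)
          - q a b * Real.logb 2 (qb b) := by
      intro a b
      by_cases h : q a b = 0
      · simp [h]
      · obtain ⟨h1, h2, h3⟩ := hposfacts a b h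
        rw [Real.logb_div h (by positivity), Real.logb_mul (ne_of_gt h2) (ne_of_gt h3)]
        ring
    simp_rw [key]
    rw [mi, hX, hY, hXY]
    simp only [Finset.sum_sub_distrib]
    ring
  set t : Finset (α × β) := Finset.univ.filter (fun c => q c.1 c.2 ≠ 0) with ht
  have hprod : ∀ g : α → β → ℝ, (∑ a, ∑ b, g a b) = ∑ c : α × β, g c.1 c.2 :=
    fun g => by rw [Fintype.sum_prod_type]
  have hsum_t : ∑ c ∈ t, q c.1 c.2 = 1 := by
    have h1 : ∑ c ∈ t, q c.1 c.2 = ∑ c : α × β, q c.1 c.2 :=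
      Finset.sum_filter_of_ne (fun c _ hne => hne)
    rw [h1, ← hprod q, htot]
  have hmi2 : mi p X Y = ∑ c ∈ t, q c.1 c.2 * Real.logb 2 (q c.1 c.2 / (qa c.1 * qb c.2)) := by
    rw [hmi, hprod (fun a b => q a b * Real.logb 2 (q a b / (qa a * qb b)))]
    exact (Finset.sum_filter_of_ne (p := fun c : α × β => q c.1 c.2 ≠ 0)
      (f := fun c : α × β => q c.1 c.2 * Real.logb 2 (q c.1 c.2 / (qa c.1 * qb c.2)))
      (fun c _ hne h0 => hne (by simp [h0]))).symm
  have hmem : ∀ c ∈ t, 0 < q c.1 c.2 ∧ 0 < qa c.1 ∧ 0 < qb c.2 := by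
    intro c hc
    exact hposfacts c.1 c.2 (Finset.mem_filter.1 hc).2
  set S := ∑ c ∈ t, q c.1 c.2 * (q c.1 c.2 / (qa c.1 * qb c.2)) with hS
  -- Jensen
  have hjen : mi p X Y ≤ Real.logb 2 S := by
    have hcc : ConcaveOn ℝ (Set.Ioi (0:ℝ)) Real.log := strictConcaveOn_log_Ioi.concaveOn
    have hj := hcc.le_map_sum (t := t) (w := fun c => q c.1 c.2)
      (p := fun c => q c.1 c.2 / (qa c.1 * qb c.2))
      (fun c hc => hq0 c.1 c.2) hsum_t
      (fun c hc => by
        obtain ⟨h1, h2, h3⟩ := hmem c hc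
        exact Set.mem_Ioi.2 (div_pos h1 (mul_pos h2 h3)))
    simp only [smul_eq_mul] at hj
    rw [hmi2]
    have hrw : ∑ c ∈ t, q c.1 c.2 * Real.logb 2 (q c.1 c.2 / (qa c.1 * qb c.2))
        = (∑ c ∈ t, q c.1 c.2 * Real.log (q c.1 c.2 / (qa c.1 * qb c.2))) / Real.log 2 := by
      rw [Finset.sum_div]
      exact Finset.sum_congr rfl fun c _ => by rw [Real.logb, mul_div_assoc]
    rw [hrw, Real.logb]
    exact div_le_div_of_nonneg_right hj (Real.log_pos one_lt_two).le
  -- bound S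
  have hterm : ∀ c ∈ t, q c.1 c.2 * (q c.1 c.2 / (qa c.1 * qb c.2))
      ≤ ∑ u, r u c.1 * s u c.2 := by
    intro c hc
    obtain ⟨hq_pos, hqa_pos, hqb_pos⟩ := hmem c hc
    obtain ⟨a, b⟩ := c
    simp only at hq_pos hqa_pos hqb_pos ⊢
    have hqb_eq : qb b = ∑ u, w u * s u b := by
      rw [hq_margb b]
      rw [show (∑ a', q a' b) = ∑ a', ∑ u, w u * (r u a' * s u b) from
        Finset.sum_congr rfl fun a' _ => hq a' b, Finset.sum_comm]
      refine Finset.sum_congr rfl fun u _ => ?_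
      by_cases hwu : w u = 0
      · simp [hwu]
      · rw [show (∑ a', w u * (r u a' * s u b)) = (∑ a', r u a') * (w u * s u b) from by
          rw [Finset.sum_mul]; exact Finset.sum_congr rfl fun a' _ => by ring]
        rw [hr, sum_condProb_eq hpn X hwu, one_mul]
    have hcs : q a b ^ 2 ≤ (∑ u, w u * s u b * r u a ^ 2) * qb b := by
      have hcs0 := Finset.sum_mul_sq_le_sq_mul_sq Finset.univ
        (fun u => Real.sqrt (w u * s u b) * r u a) (fun u => Real.sqrt (w u * s u b))
      have e1 : q a b = ∑ u, (Real.sqrt (w u * s u b) * r u a) * Real.sqrt (w u * s u b) := by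
        rw [hq a b]
        refine Finset.sum_congr rfl fun u _ => ?_
        rw [show (Real.sqrt (w u * s u b) * r u a) * Real.sqrt (w u * s u b)
            = (Real.sqrt (w u * s u b) * Real.sqrt (w u * s u b)) * r u a from by ring,
          Real.mul_self_sqrt (mul_nonneg (hw0 u) (hs0 u b))]
        ring
      have e2 : ∑ u, (Real.sqrt (w u * s u b) * r u a) ^ 2 = ∑ u, w u * s u b * r u a ^ 2 :=
        Finset.sum_congr rfl fun u _ => by
          rw [mul_pow, Real.sq_sqrt (mul_nonneg (hw0 u) (hs0 u b))]
      have e3 : ∑ u, (Real.sqrt (w u * s u b)) ^ 2 = qb b := by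
        rw [hqb_eq]
        exact Finset.sum_congr rfl fun u _ => Real.sq_sqrt (mul_nonneg (hw0 u) (hs0 u b))
      rw [e1]
      calc (∑ u, (Real.sqrt (w u * s u b) * r u a) * Real.sqrt (w u * s u b)) ^ 2
          ≤ (∑ u, (Real.sqrt (w u * s u b) * r u a) ^ 2) * ∑ u, (Real.sqrt (w u * s u b)) ^ 2 :=
            hcs0
        _ = (∑ u, w u * s u b * r u a ^ 2) * qb b := by rw [e2, e3]
    have h2 : ∑ u, w u * s u b * r u a ^ 2 ≤ (∑ u, r u a * s u b) * qa a := by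
      rw [Finset.sum_mul]
      refine Finset.sum_le_sum fun u _ => ?_
      rw [show w u * s u b * r u a ^ 2 = (w u * r u a) * (r u a * s u b) from by ring]
      calc (w u * r u a) * (r u a * s u b) ≤ qa a * (r u a * s u b) :=
            mul_le_mul_of_nonneg_right (hwr_le u a) (mul_nonneg (hr0 u a) (hs0 u b))
        _ = r u a * s u b * qa a := by ring
    calc q a b * (q a b / (qa a * qb b)) = q a b ^ 2 / (qa a * qb b) := by rw [sq]; ring
      _ ≤ ((∑ u, w u * s u b * r u a ^ 2) * qb b) / (qa a * qb b) := by
          apply div_le_div_of_nonneg_right hcs (mul_pos hqa_pos hqb_pos).le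
      _ = (∑ u, w u * s u b * r u a ^ 2) / qa a := by
          rw [mul_comm (qa a) (qb b), mul_comm (∑ u, w u * s u b * r u a ^ 2) (qb b),
            mul_div_mul_left _ _ (ne_of_gt hqb_pos)]
      _ ≤ ∑ u, r u a * s u b := by rw [div_le_iff₀ hqa_pos]; exact h2
  have hB : ∑ c : α × β, ∑ u, r u c.1 * s u c.2 ≤ (Fintype.card γ : ℝ) := by
    rw [← hprod (fun a b => ∑ u, r u a * s u b)]
    calc ∑ a, ∑ b, ∑ u, r u a * s u b
        = ∑ a, ∑ u, ∑ b, r u a * s u b :=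
          Finset.sum_congr rfl fun a _ => Finset.sum_comm
      _ = ∑ u, ∑ a, ∑ b, r u a * s u b := Finset.sum_comm
      _ = ∑ u, (∑ a, r u a) * (∑ b, s u b) := by
          refine Finset.sum_congr rfl fun u _ => ?_
          rw [Finset.sum_mul_sum]
      _ ≤ ∑ _u : γ, (1:ℝ) := by
          refine Finset.sum_le_sum fun u _ => ?_
          by_cases hwu : w u = 0
          · have hra : ∀ a, r u a = 0 := fun a => condProb_zero hwu
            simp [hra]
          · rw [hr, hs, sum_condProb_eq hpn X hwu, sum_condProb_eq hpn Y hwu, one_mul]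
      _ = (Fintype.card γ : ℝ) := by simp
  have hS_le : S ≤ (Fintype.card γ : ℝ) := by
    calc S ≤ ∑ c ∈ t, ∑ u, r u c.1 * s u c.2 := Finset.sum_le_sum hterm
      _ ≤ ∑ c : α × β, ∑ u, r u c.1 * s u c.2 :=
          Finset.sum_le_sum_of_subset_of_nonneg (Finset.filter_subset _ _)
            (fun c _ _ => Finset.sum_nonneg fun u _ => mul_nonneg (hr0 _ _) (hs0 _ _))
      _ ≤ _ := hB
  have ht_ne : t.Nonempty := by
    rcases Finset.eq_empty_or_nonempty t with h | h
    · rw [h, Finset.sum_empty] at hsum_t; norm_num at hsum_t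
    · exact h
  have hS_pos : 0 < S :=
    Finset.sum_pos (fun c hc => by
      obtain ⟨h1, h2, h3⟩ := hmem c hc
      positivity) ht_ne
  have hΩ : Nonempty Ω := by
    by_contra h
    rw [not_nonempty_iff] at h
    have h1 := hp.sum_one
    rw [Finset.univ_eq_empty, Finset.sum_empty] at h1
    norm_num at h1
  have hγ : (0:ℝ) < (Fintype.card γ : ℝ) := by
    have : Nonempty γ := ⟨U (Classical.arbitrary Ω)⟩
    exact_mod_cast Fintype.card_pos
  have hfinal : mi p X Y ≤ Real.logb 2 (Fintype.card γ) :=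
    hjen.trans ((Real.logb_le_logb one_lt_two hS_pos hγ).2 hS_le)
  refine ⟨hfinal, ?_⟩
  have h2 : (2:ℝ) ^ (mi p X Y) ≤ (2:ℝ) ^ (Real.logb 2 (Fintype.card γ : ℝ)) :=
    Real.rpow_le_rpow_of_exponent_le one_le_two hfinal
  rwa [Real.rpow_logb (by norm_num) (by norm_num) hγ] at h2
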